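/- arXiv:2305.02037 — 2 statements merged into one kernel-verified Lean document; each statement's English description precedes it below -/
import Mathlib

section
/- Let p be a prime and let r, n, k be positive integers with k(k−1) > 2n. Then there exists a finite p-group G and a subgroup N of G with [G,G] ≤ N ≤ Z(G) such that the quotient G/N is isomorphic to the direct power (C_{p^r})^n of n copies of the cyclic group of order p^r, and G contains no subgroup isomorphic to (C_{p^r})^{2k}. -/
/-!
Pick bilinear forms `A_1, …, A_k` on `𝔽_p^n` such that no `k` linearly independent vectors
`u_i` satisfy `A_l(u_i, u_j) = A_l(u_j, u_i)` for all `l, i, j`. For a fixed independent family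
these are `k · C(k,2)` independent linear conditions on the forms, and there are at most
`p^{nk} < p^{k · C(k,2)}` families, so a union bound shows that such forms exist.

Lift the forms to `ℤ/p^r` and let `G` be the central extension of `V = (ℤ/p^r)^n` by
`N = (ℤ/p^r)^k` with cocycle `(v, v') ↦ (A_l(v, v'))_l`. Two elements of `G` commute iff their
images in `V` are symmetric for every form. If `H ≅ (ℤ/p^r)^{2k}` were a subgroup of `G`, its
`p`-torsion `p^{r-1} H ≅ 𝔽_p^{2k}` would meet `N` in at most `p^k` elements. So the image of
`p^{r-1} H` in `V` has at least `p^k` elements, and since this image is `p^{r-1}` times the image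
of `H`, the reduction mod `p` of the image of `H` is an `𝔽_p`-subspace of dimension at least `k`
on which every `A_l` is symmetric, contradicting the choice of the forms.
-/

open Function Matrix

theorem exists_forall_ne_zero_of_card_lt {ι X Y : Type*} [Fintype ι] [AddGroup X] [Finite X]
    [AddGroup Y] (Φ : ι → X →+ Y) (hΦ : ∀ i, Surjective (Φ i))
    (hcard : Fintype.card ι < Nat.card Y) : ∃ x, ∀ i, Φ i x ≠ 0 := by
  by_contra! hcover
  choose c hc using hcover
  have hker : ∀ i, Nat.card (Φ i).ker * Nat.card Y = Nat.card X := fun i => by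
    rw [← AddSubgroup.card_mul_index (Φ i).ker, AddSubgroup.index_ker,
      AddMonoidHom.range_eq_top.2 (hΦ i), AddSubgroup.card_top]
  have hinj : Injective fun x : X => (⟨c x, x, hc x⟩ : Σ i, (Φ i).ker) := fun x y h =>
    congrArg (fun s : Σ i, (Φ i).ker => (s.2 : X)) h
  have hle := Nat.card_le_card_of_injective _ hinj
  rw [Nat.card_sigma] at hle
  have : Nat.card X * Nat.card Y ≤ Fintype.card ι * Nat.card X := calc
    Nat.card X * Nat.card Y ≤ (∑ i, Nat.card (Φ i).ker) * Nat.card Y :=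
        Nat.mul_le_mul_right _ hle
    _ = Fintype.card ι * Nat.card X := by
        rw [Finset.sum_mul, Finset.sum_congr rfl fun i _ => hker i, Finset.sum_const,
          Finset.card_univ, smul_eq_mul]
  have hX : 0 < Nat.card X := Nat.card_pos
  nlinarith

theorem exists_matrix_dotProduct_mulVec_eq {K ι m : Type*} [Field K] [Fintype ι] [DecidableEq ι]
    [Fintype m] [DecidableEq m] {u : ι → m → K} (hu : LinearIndependent K u) (T : Matrix ι ι K) :
    ∃ M : Matrix m m K, ∀ i j, u i ⬝ᵥ M *ᵥ u j = T i j := by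
  obtain ⟨g, hg⟩ := LinearMap.exists_leftInverse_of_injective (Fintype.linearCombination K u)
    (LinearMap.ker_eq_bot.2 (linearIndependent_iff_injective_fintypeLinearCombination.1 hu))
  have hgu : ∀ i, LinearMap.toMatrix' g *ᵥ u i = Pi.single i 1 := fun i => by
    rw [LinearMap.toMatrix'_mulVec, ← one_smul K (u i),
      ← Fintype.linearCombination_apply_single K u i 1, ← LinearMap.comp_apply, hg,
      LinearMap.id_apply]
  refine ⟨(LinearMap.toMatrix' g)ᵀ * T * LinearMap.toMatrix' g, fun i j => ?_⟩
  rw [← mulVec_mulVec, ← mulVec_mulVec, dotProduct_mulVec, vecMul_transpose, hgu, hgu,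
    single_one_dotProduct, mulVec_single_one]
  rfl

section SkewPairing

variable {R ι m : Type*} [CommRing R] [Fintype m] [LinearOrder ι]

def skewPairing (u : ι → m → R) : Matrix m m R →+ ({q : ι × ι // q.1 < q.2} → R) where
  toFun M q := u q.1.1 ⬝ᵥ M *ᵥ u q.1.2 - u q.1.2 ⬝ᵥ M *ᵥ u q.1.1
  map_zero' := by ext; simp
  map_add' M N := by ext; simp only [add_mulVec, dotProduct_add, Pi.add_apply]; ring

theorem skewPairing_apply (u : ι → m → R) (M : Matrix m m R) (q : {q : ι × ι // q.1 < q.2}) :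
    skewPairing u M q = u q.1.1 ⬝ᵥ M *ᵥ u q.1.2 - u q.1.2 ⬝ᵥ M *ᵥ u q.1.1 := rfl

theorem skewPairing_surjective {K : Type*} [Field K] [Fintype ι] [DecidableEq m]
    {u : ι → m → K} (hu : LinearIndependent K u) : Surjective (skewPairing u) := by
  intro t
  obtain ⟨M, hM⟩ := exists_matrix_dotProduct_mulVec_eq hu
    fun i j => if h : i < j then t ⟨(i, j), h⟩ else 0
  refine ⟨M, funext fun q => ?_⟩
  rw [skewPairing_apply, hM, hM, dif_pos q.2, dif_neg (lt_asymm q.2), sub_zero]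

end SkewPairing

theorem card_subtype_fst_lt_snd (α : Type*) [Fintype α] [LinearOrder α] :
    Fintype.card {q : α × α // q.1 < q.2} = (Fintype.card α).choose 2 := by
  rw [Fintype.card_subtype, ← Finset.univ_product_univ, Finset.card_product_filter_lt,
    Finset.card_univ]

theorem exists_matrices_forall_linearIndependent_exists_ne {K : Type*} [Field K] [Fintype K]
    {n k ℓ : ℕ} (h : n * k < ℓ * k.choose 2) :
    ∃ A : Fin ℓ → Matrix (Fin n) (Fin n) K, ∀ u : Fin k → Fin n → K, LinearIndependent K u →
      ∃ l i j, u i ⬝ᵥ A l *ᵥ u j ≠ u j ⬝ᵥ A l *ᵥ u i := by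
  classical
  have hcard : Fintype.card {u : Fin k → Fin n → K // LinearIndependent K u} <
      Nat.card (Fin ℓ → {q : Fin k × Fin k // q.1 < q.2} → K) := calc
    _ ≤ Fintype.card (Fin k → Fin n → K) := Fintype.card_subtype_le _
    _ = Fintype.card K ^ (n * k) := by simp [← pow_mul]
    _ < Fintype.card K ^ (ℓ * k.choose 2) := Nat.pow_lt_pow_right Fintype.one_lt_card h
    _ = _ := by simp [Nat.card_eq_fintype_card, card_subtype_fst_lt_snd, ← pow_mul, mul_comm]
  obtain ⟨A, hA⟩ := exists_forall_ne_zero_of_card_lt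
    (fun u : {u : Fin k → Fin n → K // LinearIndependent K u} =>
      (skewPairing u.1).compLeft (Fin ℓ))
    (fun u => (skewPairing_surjective u.2).comp_left) hcard
  refine ⟨A, fun u hu => ?_⟩
  obtain ⟨l, hl⟩ := Function.ne_iff.1 (hA ⟨u, hu⟩)
  obtain ⟨q, hq⟩ := Function.ne_iff.1 hl
  exact ⟨l, q.1.1, q.1.2, sub_ne_zero.1 hq⟩

section MatrixForms

variable {R L m : Type*} [CommRing R] [Fintype m]

def bilinOfMatrices (M : L → Matrix m m R) : (m → R) →+ (m → R) →+ (L → R) :=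
  AddMonoidHom.mk' (fun x => AddMonoidHom.mk' (fun y l => x ⬝ᵥ M l *ᵥ y)
    fun y y' => by ext; simp [mulVec_add, dotProduct_add])
    fun x x' => by ext; simp [add_dotProduct]

theorem bilinOfMatrices_apply (M : L → Matrix m m R) (x y : m → R) (l : L) :
    bilinOfMatrices M x y l = x ⬝ᵥ M l *ᵥ y := rfl

theorem RingHom.map_dotProduct_mulVec {S : Type*} [CommRing S] (f : R →+* S) (x y : m → R)
    (A : Matrix m m R) : f (x ⬝ᵥ A *ᵥ y) = (f ∘ x) ⬝ᵥ A.map f *ᵥ (f ∘ y) := by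
  rw [RingHom.map_dotProduct]
  congr 1
  exact funext (RingHom.map_mulVec f A y)

end MatrixForms

@[ext]
structure BilinExt {V W : Type*} [AddCommGroup V] [AddCommGroup W] (β : V →+ V →+ W) where
  fst : V
  snd : W

namespace BilinExt

variable {V W : Type*} [AddCommGroup V] [AddCommGroup W] {β : V →+ V →+ W}

instance : Mul (BilinExt β) := ⟨fun x y => ⟨x.fst + y.fst, x.snd + y.snd + β x.fst y.fst⟩⟩
instance : One (BilinExt β) := ⟨⟨0, 0⟩⟩
instance : Inv (BilinExt β) := ⟨fun x => ⟨-x.fst, -x.snd + β x.fst x.fst⟩⟩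

@[simp] theorem mul_fst (x y : BilinExt β) : (x * y).fst = x.fst + y.fst := rfl
@[simp] theorem mul_snd (x y : BilinExt β) : (x * y).snd = x.snd + y.snd + β x.fst y.fst := rfl
@[simp] theorem one_fst : (1 : BilinExt β).fst = 0 := rfl
@[simp] theorem one_snd : (1 : BilinExt β).snd = 0 := rfl
@[simp] theorem inv_fst (x : BilinExt β) : x⁻¹.fst = -x.fst := rfl
@[simp] theorem inv_snd (x : BilinExt β) : x⁻¹.snd = -x.snd + β x.fst x.fst := rfl

instance : Group (BilinExt β) :=
  Group.ofLeftAxioms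
    (fun x y z => by
      ext <;> simp only [mul_fst, mul_snd, map_add, AddMonoidHom.add_apply] <;> abel)
    (fun x => by ext <;> simp)
    (fun x => by ext <;> simp)

def equivProd : BilinExt β ≃ V × W where
  toFun x := (x.fst, x.snd)
  invFun y := ⟨y.1, y.2⟩

instance [Finite V] [Finite W] : Finite (BilinExt β) := .of_equiv _ equivProd.symm

theorem card_eq : Nat.card (BilinExt β) = Nat.card V * Nat.card W := by
  rw [Nat.card_congr equivProd, Nat.card_prod]

def fstHom : BilinExt β →* Multiplicative V where
  toFun x := .ofAdd x.fst
  map_one' := rfl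
  map_mul' _ _ := rfl

theorem fstHom_surjective : Surjective (fstHom (β := β)) := fun v => ⟨⟨v.toAdd, 0⟩, rfl⟩

theorem mem_ker_fstHom {x : BilinExt β} : x ∈ (fstHom (β := β)).ker ↔ x.fst = 0 := by
  rw [MonoidHom.mem_ker]; rfl

theorem ker_fstHom_le_center : (fstHom (β := β)).ker ≤ Subgroup.center (BilinExt β) := by
  intro x hx
  rw [mem_ker_fstHom] at hx
  refine Subgroup.mem_center_iff.2 fun y => ?_
  ext <;> simp [hx, add_comm]

theorem commute_iff {x y : BilinExt β} : Commute x y ↔ β x.fst y.fst = β y.fst x.fst := by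
  rw [Commute, SemiconjBy, BilinExt.ext_iff]
  simp only [mul_fst, mul_snd, add_comm x.fst, true_and]
  constructor <;> intro h
  · simpa [add_comm x.snd] using h
  · rw [add_comm x.snd, h]

theorem pow_snd_of_fst_eq_zero {x : BilinExt β} (hx : x.fst = 0) (j : ℕ) :
    (x ^ j).snd = j • x.snd := by
  induction j with
  | zero => simp
  | succ j ih => simp [pow_succ, ih, hx, succ_nsmul]

end BilinExt

theorem card_pi_nsmul_eq_zero_le {ι A : Type*} [Fintype ι] [AddCommGroup A] [Finite A]
    [IsAddCyclic A] {d : ℕ} (hd : 0 < d) :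
    Nat.card {w : ι → A // d • w = 0} ≤ d ^ Fintype.card ι := by
  classical
  have : Fintype A := Fintype.ofFinite A
  let e : {w : ι → A // d • w = 0} ≃ (ι → {a : A // d • a = 0}) :=
    (Equiv.subtypeEquivRight fun _ => funext_iff).trans
      (Equiv.subtypePiEquivPi (β := fun _ : ι => A) (p := fun _ a => d • a = 0))
  rw [Nat.card_congr e, Nat.card_pi]
  calc ∏ _i : ι, Nat.card {a : A // d • a = 0} ≤ ∏ _i : ι, d :=
        Finset.prod_le_prod' fun i _ => by
          rw [Nat.card_eq_fintype_card, Fintype.card_subtype]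
          exact IsAddCyclic.card_nsmul_eq_zero_le hd
    _ = d ^ Fintype.card ι := by simp

section Reduction

variable (p s : ℕ)

def reduceMod : ZMod (p ^ (s + 1)) →+* ZMod p :=
  ZMod.castHom (dvd_pow_self p s.succ_ne_zero) (ZMod p)

def powMulHom : ZMod p →+ ZMod (p ^ (s + 1)) :=
  ZMod.lift p ⟨zmultiplesHom _ ((p : ZMod (p ^ (s + 1))) ^ s), by
    rw [zmultiplesHom_apply, natCast_zsmul, nsmul_eq_mul, ← pow_succ', ← Nat.cast_pow,
      ZMod.natCast_self]⟩

theorem powMulHom_intCast (a : ℤ) : powMulHom p s a = a * (p : ZMod (p ^ (s + 1))) ^ s := by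
  rw [powMulHom, ZMod.lift_coe, zmultiplesHom_apply, zsmul_eq_mul]

theorem powMulHom_reduceMod (c : ZMod (p ^ (s + 1))) :
    powMulHom p s (reduceMod p s c) = p ^ s • c := by
  rw [← ZMod.intCast_zmod_cast c, map_intCast, powMulHom_intCast, nsmul_eq_mul, mul_comm,
    Nat.cast_pow]

theorem powMulHom_compLeft_reduceMod {ι : Type*} (y : ι → ZMod (p ^ (s + 1))) :
    (powMulHom p s).compLeft ι (reduceMod p s ∘ y) = p ^ s • y :=
  funext fun i => powMulHom_reduceMod p s (y i)

theorem powMulHom_injective [NeZero p] : Injective (powMulHom p s) := by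
  rw [injective_iff_map_eq_zero]
  intro a ha
  rw [← ZMod.natCast_zmod_val a, ← Int.cast_natCast, powMulHom_intCast, Int.cast_natCast,
    ← Nat.cast_pow, ← Nat.cast_mul, ZMod.natCast_eq_zero_iff, pow_succ'] at ha
  rw [← ZMod.natCast_zmod_val a, ZMod.natCast_eq_zero_iff]
  exact Nat.dvd_of_mul_dvd_mul_right (pow_pos (NeZero.pos p) s) ha

end Reduction

section HomocyclicSubgroup

variable {p s n m ℓ : ℕ} {M : Fin ℓ → Matrix (Fin n) (Fin n) (ZMod (p ^ (s + 1)))}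

def baseHom (τ : Multiplicative (Fin m → ZMod (p ^ (s + 1))) →* BilinExt (bilinOfMatrices M)) :
    (Fin m → ZMod (p ^ (s + 1))) →+ (Fin n → ZMod (p ^ (s + 1))) :=
  AddMonoidHom.toMultiplicative.symm (BilinExt.fstHom.comp τ)

def reducedImage
    (τ : Multiplicative (Fin m → ZMod (p ^ (s + 1))) →* BilinExt (bilinOfMatrices M)) :
    AddSubgroup (Fin n → ZMod p) :=
  (baseHom τ).range.map ((reduceMod p s).toAddMonoidHom.compLeft (Fin n))

theorem card_ker_baseHom_comp_powMulHom_le [NeZero p]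
    {τ : Multiplicative (Fin m → ZMod (p ^ (s + 1))) →* BilinExt (bilinOfMatrices M)}
    (hτ : Injective τ) :
    Nat.card ((baseHom τ).comp ((powMulHom p s).compLeft (Fin m))).ker ≤ p ^ ℓ := by
  -- `Θ` identifies `𝔽_p^m` with the `p`-torsion of `(ℤ/p^(s+1))^m`, so `τ ∘ Θ` embeds the
  -- kernel into the `p`-torsion of the centre.
  set Θ := (powMulHom p s).compLeft (Fin m)
  set φ := (baseHom τ).comp Θ
  have hsnd : ∀ z : φ.ker, p • (τ (.ofAdd (Θ z))).snd = 0 := fun z => by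
    have hpz : p • (z : Fin m → ZMod p) = 0 := by ext; simp
    rw [← BilinExt.pow_snd_of_fst_eq_zero z.2, ← map_pow, ← ofAdd_nsmul, ← map_nsmul, hpz,
      map_zero, ofAdd_zero, map_one, BilinExt.one_snd]
  refine le_trans (Nat.card_le_card_of_injective
    (fun z : φ.ker => (⟨(τ (.ofAdd (Θ z))).snd, hsnd z⟩ :
      {w : Fin ℓ → ZMod (p ^ (s + 1)) // p • w = 0})) fun z z' h => ?_) ?_
  · have hτz : τ (.ofAdd (Θ z)) = τ (.ofAdd (Θ z')) :=
      BilinExt.ext (z.2.trans z'.2.symm) (congrArg Subtype.val h)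
    exact Subtype.ext ((powMulHom_injective p s).comp_left (hτ hτz))
  · exact (card_pi_nsmul_eq_zero_le (NeZero.pos p)).trans_eq (by rw [Fintype.card_fin])

theorem card_range_baseHom_comp_powMulHom_le [NeZero p]
    (τ : Multiplicative (Fin m → ZMod (p ^ (s + 1))) →* BilinExt (bilinOfMatrices M)) :
    Nat.card ((baseHom τ).comp ((powMulHom p s).compLeft (Fin m))).range ≤
      Nat.card (reducedImage τ) := by
  have hle : ((baseHom τ).comp ((powMulHom p s).compLeft (Fin m))).range ≤
      (reducedImage τ).map ((powMulHom p s).compLeft (Fin n)) := by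
    rintro _ ⟨z, rfl⟩
    obtain ⟨x, rfl⟩ := (ZMod.ringHom_surjective (reduceMod p s)).comp_left z
    have : (baseHom τ).comp ((powMulHom p s).compLeft (Fin m)) (reduceMod p s ∘ x) =
        (powMulHom p s).compLeft (Fin n) (reduceMod p s ∘ baseHom τ x) := by
      rw [powMulHom_compLeft_reduceMod, AddMonoidHom.comp_apply, powMulHom_compLeft_reduceMod,
        map_nsmul]
    rw [this]
    exact AddSubgroup.mem_map_of_mem _
      (AddSubgroup.mem_map_of_mem _ (AddMonoidHom.mem_range.2 ⟨x, rfl⟩))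
  calc _ ≤ Nat.card ((reducedImage τ).map ((powMulHom p s).compLeft (Fin n))) :=
        AddSubgroup.card_le_of_le hle
    _ = Nat.card (reducedImage τ) :=
        AddSubgroup.card_map_of_injective (powMulHom_injective p s).comp_left

theorem pow_le_card_reducedImage [NeZero p]
    {τ : Multiplicative (Fin m → ZMod (p ^ (s + 1))) →* BilinExt (bilinOfMatrices M)}
    (hτ : Injective τ) : p ^ m ≤ p ^ ℓ * Nat.card (reducedImage τ) := by
  set φ := (baseHom τ).comp ((powMulHom p s).compLeft (Fin m))
  calc p ^ m = Nat.card φ.ker * Nat.card φ.range := by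
        rw [← AddSubgroup.index_ker, AddSubgroup.card_mul_index]
        simp
    _ ≤ p ^ ℓ * Nat.card (reducedImage τ) :=
        Nat.mul_le_mul (card_ker_baseHom_comp_powMulHom_le hτ)
          (card_range_baseHom_comp_powMulHom_le τ)

theorem reducedImage_dotProduct_mulVec_comm
    (τ : Multiplicative (Fin m → ZMod (p ^ (s + 1))) →* BilinExt (bilinOfMatrices M))
    {a b : Fin n → ZMod p} (ha : a ∈ reducedImage τ) (hb : b ∈ reducedImage τ) (l : Fin ℓ) :
    a ⬝ᵥ (M l).map (reduceMod p s) *ᵥ b = b ⬝ᵥ (M l).map (reduceMod p s) *ᵥ a := by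
  obtain ⟨_, ⟨x, rfl⟩, rfl⟩ := ha
  obtain ⟨_, ⟨y, rfl⟩, rfl⟩ := hb
  have hcomm := BilinExt.commute_iff.1 ((Commute.all (Multiplicative.ofAdd x) (.ofAdd y)).map τ)
  have h := congrArg (reduceMod p s) (congrFun hcomm l)
  rwa [bilinOfMatrices_apply, bilinOfMatrices_apply, RingHom.map_dotProduct_mulVec,
    RingHom.map_dotProduct_mulVec] at h

theorem exists_linearIndependent_dotProduct_mulVec_comm [Fact p.Prime]
    {τ : Multiplicative (Fin m → ZMod (p ^ (s + 1))) →* BilinExt (bilinOfMatrices M)}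
    (hτ : Injective τ) {j : ℕ} (hj : j + ℓ ≤ m) :
    ∃ u : Fin j → Fin n → ZMod p, LinearIndependent (ZMod p) u ∧
      ∀ l i i', u i ⬝ᵥ (M l).map (reduceMod p s) *ᵥ u i' =
        u i' ⬝ᵥ (M l).map (reduceMod p s) *ᵥ u i := by
  set S := AddSubgroup.toZModSubmodule p (reducedImage τ)
  have hdim : j ≤ Module.finrank (ZMod p) S := by
    have hS : Nat.card S = p ^ Module.finrank (ZMod p) S := by
      rw [Module.natCard_eq_pow_finrank (K := ZMod p), Nat.card_zmod]
    have hcard : p ^ m ≤ p ^ ℓ * Nat.card S := pow_le_card_reducedImage hτ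
    rw [hS, ← pow_add, Nat.pow_le_pow_iff_right (Fact.out : p.Prime).one_lt] at hcard
    omega
  obtain ⟨u, hu⟩ := exists_linearIndependent_of_le_finrank hdim
  exact ⟨_, hu.map' S.subtype S.ker_subtype, fun l i i' =>
    reducedImage_dotProduct_mulVec_comm τ (u i).2 (u i').2 l⟩

end HomocyclicSubgroup

theorem stmt_6_general (p r n k : ℕ) (hp : p.Prime) (hr : 0 < r)
    (h : k * (k - 1) > 2 * n) :
    ∃ (G : Type) (_ : Group G) (_ : Finite G), IsPGroup p G ∧
      ∃ N : Subgroup G,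
        commutator G ≤ N ∧ N ≤ Subgroup.center G ∧
        (∃ f : G →* Multiplicative (Fin n → ZMod (p ^ r)),
          Function.Surjective f ∧ f.ker = N) ∧
        ¬ ∃ H : Subgroup G,
            Nonempty (H ≃* Multiplicative (Fin (2 * k) → ZMod (p ^ r))) := by
  obtain ⟨s, rfl⟩ : ∃ s, r = s + 1 := ⟨r - 1, by omega⟩
  have := Fact.mk hp
  have hnk : n * k < k * k.choose 2 := by
    obtain ⟨t, ht⟩ := Nat.even_mul_pred_self k
    have hk : 0 < k := Nat.pos_of_ne_zero (by rintro rfl; simp at h)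
    rw [Nat.choose_two_right, ht, mul_comm n]
    exact Nat.mul_lt_mul_of_pos_left (by omega) hk
  obtain ⟨A, hA⟩ := exists_matrices_forall_linearIndependent_exists_ne (K := ZMod p) hnk
  set M := fun l => (A l).map fun a : ZMod p => (a.val : ZMod (p ^ (s + 1)))
  have hM : ∀ l, (M l).map (reduceMod p s) = A l := fun l => by ext; simp [M, reduceMod]
  refine ⟨BilinExt (bilinOfMatrices M), inferInstance, inferInstance, ?_, BilinExt.fstHom.ker,
    Abelianization.commutator_subset_ker _, BilinExt.ker_fstHom_le_center,
    ⟨_, BilinExt.fstHom_surjective, rfl⟩, ?_⟩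
  · refine IsPGroup.of_card (n := (s + 1) * (n + k)) ?_
    rw [BilinExt.card_eq]
    simp [← pow_mul, ← pow_add, mul_add]
  · rintro ⟨H, ⟨e⟩⟩
    obtain ⟨u, hu, hcomm⟩ := exists_linearIndependent_dotProduct_mulVec_comm (j := k)
      (τ := H.subtype.comp e.symm.toMonoidHom) (H.subtype_injective.comp e.symm.injective)
      (by omega)
    obtain ⟨l, i, i', hne⟩ := hA u hu
    exact hne (by simpa only [hM] using hcomm l i i')

/-- For any prime `p` and positive integers `r, n, k` with `k(k-1) > 2n`, there is a
finite `p`-group `G` and a subgroup `N` with `[G,G] ≤ N ≤ Z(G)` such that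
`G/N ≃ (C_{p^r})ⁿ` (expressed via a surjective homomorphism onto `(C_{p^r})ⁿ` with
kernel `N`) and `G` contains no subgroup isomorphic to `(C_{p^r})^{2k}`. -/
theorem stmt_6 (p r n k : ℕ) (hp : p.Prime) (hr : 0 < r) (hn : 0 < n) (hk : 0 < k)
    (h : k * (k - 1) > 2 * n) :
    ∃ (G : Type) (_ : Group G) (_ : Finite G), IsPGroup p G ∧
      ∃ N : Subgroup G,
        commutator G ≤ N ∧ N ≤ Subgroup.center G ∧
        (∃ f : G →* Multiplicative (Fin n → ZMod (p ^ r)),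
          Function.Surjective f ∧ f.ker = N) ∧
        ¬ ∃ H : Subgroup G,
            Nonempty (H ≃* Multiplicative (Fin (2 * k) → ZMod (p ^ r))) :=
  stmt_6_general p r n k hp hr h
end

section
/- Let p be a prime, n a positive integer, and A an abelian subgroup of GL(n, F_p) whose order is coprime to p. Then |A| ≤ p^n − 1. -/
/-!
Induct on `|V|`. If `V` has a proper nonzero `A`-invariant subspace `W`, an element of `A` acting
trivially on both `W` and `V/W` satisfies `(a - 1)² = 0`, hence `a ^ p = 1`, and coprimality forces
`a = 1`. So `A` embeds into the product of its images in `GL(W)` and `GL(V/W)`, which gives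
`|A| ≤ (|W| - 1)(|V/W| - 1) ≤ |V| - 1`. Otherwise, since `A` is abelian, the fixed space of each
`a ∈ A` is `A`-invariant, hence `0` or `V`: `A` acts freely on `V \ {0}`.
-/

open LinearMap (GeneralLinearGroup)

theorem one_add_pow_of_sq_eq_zero {R : Type*} [Semiring R] {x : R} (hx : x ^ 2 = 0) (n : ℕ) :
    (1 + x) ^ n = 1 + n * x := by
  induction n with
  | zero => simp
  | succ n ih =>
    rw [pow_succ, ih, add_mul, one_mul, mul_add, mul_one, mul_assoc, ← sq, hx]
    push_cast
    simp only [mul_zero, add_zero, add_mul, one_mul]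
    abel

theorem pow_eq_one_of_sub_one_sq_eq_zero {R : Type*} [Ring R] {f : R} (hf : (f - 1) ^ 2 = 0)
    {p : ℕ} (hp : (p : R) = 0) : f ^ p = 1 := by
  simpa [hp] using one_add_pow_of_sq_eq_zero hf p

theorem Nat.sub_one_mul_sub_one_le (m n : ℕ) : (m - 1) * (n - 1) ≤ m * n - 1 := by
  rcases m with _ | m <;> rcases n with _ | n <;> simp [add_one_mul, mul_add_one]
  omega

section

variable {k V : Type*} [CommRing k] [AddCommGroup V] [Module k V]

theorem Module.End.sub_one_sq_eq_zero_of_restrict_eq_one_of_mapQ_eq_one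
    {f : Module.End k V} {W : Submodule k V} (hW : W ≤ W.comap f)
    (hrestrict : f.restrict hW = 1) (hmapQ : W.mapQ W f hW = 1) : (f - 1) ^ 2 = 0 := by
  ext x
  have hx : f x - x ∈ W := (Submodule.Quotient.eq W).mp (LinearMap.congr_fun hmapQ (W.mkQ x))
  have := congr_arg Subtype.val (LinearMap.congr_fun hrestrict ⟨_, hx⟩)
  simpa [sq, sub_eq_zero] using this

def Subgroup.toRepresentation (A : Subgroup (GeneralLinearGroup k V)) : Representation k A V :=
  (Units.coeHom (Module.End k V)).comp A.subtype

namespace Subgroup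

variable (A : Subgroup (GeneralLinearGroup k V))

theorem toRepresentation_injective : Function.Injective A.toRepresentation :=
  fun _ _ h => Subtype.ext (Units.ext h)

theorem eq_one_of_toRepresentation_apply_eq_self [IsMulCommutative A]
    (hirr : ∀ W : Submodule k V, (∀ a, W ≤ W.comap (A.toRepresentation a)) → W = ⊥ ∨ W = ⊤)
    {a : A} {v : V} (hv : v ≠ 0) (hav : A.toRepresentation a v = v) : a = 1 := by
  set E := Module.End.eigenspace (A.toRepresentation a) 1
  have hE (b : A) : E ≤ E.comap (A.toRepresentation b) :=
    Module.End.mapsTo_genEigenspace_of_comm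
      (by rw [Commute, SemiconjBy, ← map_mul, ← map_mul, mul_comm' a b]) 1 1
  have hvE : v ∈ E := by simpa [E, Module.End.mem_eigenspace_iff] using hav
  have hEtop : E = ⊤ :=
    (hirr E hE).resolve_left fun h => hv ((Submodule.eq_bot_iff E).mp h v hvE)
  apply A.toRepresentation_injective
  ext x
  have hx : x ∈ E := hEtop ▸ Submodule.mem_top
  simpa using Module.End.mem_eigenspace_iff.mp hx

theorem card_le_card_sub_one_of_irreducible [Finite V] [Nontrivial V] [IsMulCommutative A]
    (hirr : ∀ W : Submodule k V, (∀ a, W ≤ W.comap (A.toRepresentation a)) → W = ⊥ ∨ W = ⊤) :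
    Nat.card A ≤ Nat.card V - 1 := by
  obtain ⟨v, hv⟩ := exists_ne (0 : V)
  have hne (a : A) : A.toRepresentation a v ≠ 0 := fun h => hv <| by
    simpa using congr_arg (A.toRepresentation a⁻¹) h
  have horbit :
      Function.Injective fun a : A => (⟨A.toRepresentation a v, hne a⟩ : {x : V // x ≠ 0}) := by
    intro a b hab
    have : A.toRepresentation (a⁻¹ * b) v = v := by
      simpa [Module.End.mul_apply] using
        congr_arg (A.toRepresentation a⁻¹) (congr_arg Subtype.val hab).symm
    exact inv_mul_eq_one.mp (A.eq_one_of_toRepresentation_apply_eq_self hirr hv this)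
  have := Fintype.ofFinite V
  classical
  calc Nat.card A ≤ Nat.card {x : V // x ≠ 0} := Nat.card_le_card_of_injective _ horbit
    _ = Nat.card V - 1 := by
      rw [Nat.card_eq_fintype_card, Nat.card_eq_fintype_card]
      exact Set.card_ne_eq 0

variable {A} (p : ℕ) [CharP k p] (hcop : (Nat.card A).Coprime p)
include hcop

theorem eq_one_of_subrepresentation_eq_one_of_quotient_eq_one {W : Submodule k V}
    (hW : ∀ a, W ≤ W.comap (A.toRepresentation a)) {a : A}
    (hsub : A.toRepresentation.subrepresentation W hW a = 1)
    (hquot : A.toRepresentation.quotient W hW a = 1) : a = 1 := by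
  have hsq := Module.End.sub_one_sq_eq_zero_of_restrict_eq_one_of_mapQ_eq_one (hW a) hsub hquot
  have hp : (p : Module.End k V) = 0 := by
    rw [← map_natCast (algebraMap k (Module.End k V)), CharP.cast_eq_zero, map_zero]
  have hap : a ^ p = 1 := A.toRepresentation_injective <| by
    rw [map_pow, map_one, pow_eq_one_of_sub_one_sq_eq_zero hsq hp]
  exact hcop.pow_left_bijective.injective (by rw [hap, one_pow])

theorem card_le_card_range_mul_card_range [Finite V] {W : Submodule k V}
    (hW : ∀ a, W ≤ W.comap (A.toRepresentation a)) :
    Nat.card A ≤ Nat.card (A.toRepresentation.subrepresentation W hW).toHomUnits.range *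
      Nat.card (A.toRepresentation.quotient W hW).toHomUnits.range := by
  have : Finite (Module.End k W) := .of_injective _ DFunLike.coe_injective
  have : Finite (V ⧸ W) := .of_surjective _ W.mkQ_surjective
  have : Finite (Module.End k (V ⧸ W)) := .of_injective _ DFunLike.coe_injective
  set F := (A.toRepresentation.subrepresentation W hW).toHomUnits.rangeRestrict.prod
    (A.toRepresentation.quotient W hW).toHomUnits.rangeRestrict
  have hF : Function.Injective F := (injective_iff_map_eq_one F).mpr fun a ha => by
    simp only [F, Prod.ext_iff, MonoidHom.prod_apply, Prod.fst_one, Prod.snd_one,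
      Subtype.ext_iff, Units.ext_iff] at ha
    exact eq_one_of_subrepresentation_eq_one_of_quotient_eq_one p hcop hW ha.1 ha.2
  simpa only [Nat.card_prod] using Nat.card_le_card_of_injective F hF

theorem card_le_card_sub_one_of_coprime [Finite V] [Nontrivial V] [IsMulCommutative A] :
    Nat.card A ≤ Nat.card V - 1 := by
  induction hV : Nat.card V using Nat.strong_induction_on generalizing V with
  | _ n ih =>
  by_cases hirr : ∀ W : Submodule k V, (∀ a, W ≤ W.comap (A.toRepresentation a)) → W = ⊥ ∨ W = ⊤
  · exact hV ▸ A.card_le_card_sub_one_of_irreducible hirr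
  push Not at hirr
  obtain ⟨W, hW, hbot, htop⟩ := hirr
  have : Nontrivial W := Submodule.nontrivial_iff_ne_bot.mpr hbot
  have : Nontrivial (V ⧸ W) := Submodule.Quotient.nontrivial_iff.mpr htop
  have : Finite (V ⧸ W) := .of_surjective _ W.mkQ_surjective
  have hn : n = Nat.card W * Nat.card (V ⧸ W) := hV ▸ W.card_eq_card_quotient_mul_card
  have hW₁ := Finite.one_lt_card_iff_nontrivial.mpr ‹Nontrivial W›
  have hQ₁ := Finite.one_lt_card_iff_nontrivial.mpr ‹Nontrivial (V ⧸ W)›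
  calc Nat.card A
      ≤ Nat.card (A.toRepresentation.subrepresentation W hW).toHomUnits.range *
          Nat.card (A.toRepresentation.quotient W hW).toHomUnits.range :=
        card_le_card_range_mul_card_range p hcop hW
    _ ≤ (Nat.card W - 1) * (Nat.card (V ⧸ W) - 1) := by
        gcongr
        · exact ih _ (hn ▸ lt_mul_of_one_lt_right (by omega) hQ₁)
            (hcop.coprime_dvd_left (card_range_dvd _)) rfl
        · exact ih _ (hn ▸ lt_mul_of_one_lt_left (by omega) hW₁)
            (hcop.coprime_dvd_left (card_range_dvd _)) rfl
    _ ≤ n - 1 := hn ▸ Nat.sub_one_mul_sub_one_le _ _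

end Subgroup

end

/-- If `A` is an abelian subgroup of `GL(n, F_p)` whose order is coprime to `p`,
then `|A| ≤ pⁿ - 1`. -/
theorem stmt_14 (p n : ℕ) (hp : p.Prime) (hn : 0 < n)
    (A : Subgroup (Matrix.GeneralLinearGroup (Fin n) (ZMod p)))
    (hA : ∀ x ∈ A, ∀ y ∈ A, x * y = y * x)
    (hcop : Nat.Coprime (Nat.card A) p) :
    Nat.card A ≤ p ^ n - 1 := by
  have : Fact p.Prime := ⟨hp⟩
  have : Nonempty (Fin n) := Fin.pos_iff_nonempty.mp hn
  have : IsMulCommutative A := .of_setLike_mul_comm hA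
  set A' := A.map (Matrix.GeneralLinearGroup.toLin.toMonoidHom :
    Matrix.GeneralLinearGroup (Fin n) (ZMod p) →* GeneralLinearGroup (ZMod p) (Fin n → ZMod p))
  have hcard : Nat.card A' = Nat.card A := Subgroup.card_map_of_injective (MulEquiv.injective _)
  simpa [hcard, Nat.card_fun] using
    Subgroup.card_le_card_sub_one_of_coprime (A := A') p (hcard ▸ hcop)
end
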